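/- Let A ∈ ℤ^{n×n} be nonsingular with Smith form S = diag(s_1,…,s_n), and let M ∈ ℤ^{n×n} be a Smith massager for A. Then for every 1 ≤ i ≤ n and every prime p dividing s_{n-i+1}, the n×i matrix formed by the last i columns of M, reduced modulo p, has rank i over the field ℤ/(p). -/

import Mathlib

/-
Every column index `j` among the last `i` has `p ∣ s_{n-i+1} ∣ s_j`, so reducing
`W * M ≡ I (colmod S)` modulo `p` and keeping the last `i` rows and columns gives `W' * M' = I`
over `ℤ/(p)`, with `M'` the last `i` columns of `M` mod `p`. A matrix with a left inverse has
full column rank.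
-/

open Matrix

/-- A square integer matrix is unimodular if its determinant is `±1`. -/
def IsUnimodular {ι : Type*} [Fintype ι] [DecidableEq ι] (U : Matrix ι ι ℤ) : Prop :=
  U.det = 1 ∨ U.det = -1

/-- `S` is a Smith form of `A`: it is diagonal with positive diagonal entries
forming a divisibility chain, and `P * A * Q = S` for some unimodular `P`, `Q`. -/
def IsSmithForm {n : ℕ} (A S : Matrix (Fin n) (Fin n) ℤ) : Prop :=
  (∀ i j : Fin n, i ≠ j → S i j = 0) ∧ (∀ i, 0 < S i i) ∧
  (∀ i j : Fin n, i ≤ j → S i i ∣ S j j) ∧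
  ∃ P Q : Matrix (Fin n) (Fin n) ℤ, IsUnimodular P ∧ IsUnimodular Q ∧ P * A * Q = S

/-- `B ≡ C (colmod S)`: column `j` of `B` is congruent to column `j` of `C`
modulo the `j`-th diagonal entry of `S`. -/
def ColMod {ι : Type*} [Fintype ι] (S B C : Matrix ι ι ℤ) : Prop :=
  ∀ i j, S j j ∣ (B i j - C i j)

/-- `M` is a Smith massager for `A` (with Smith form `S`):
`A * M ≡ 0 (colmod S)` and `W * M ≡ I (colmod S)` for some integer matrix `W`. -/
def IsSmithMassager {ι : Type*} [Fintype ι] [DecidableEq ι] (A S M : Matrix ι ι ℤ) : Prop :=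
  ColMod S (A * M) 0 ∧ ∃ W : Matrix ι ι ℤ, ColMod S (W * M) 1

theorem Matrix.rank_eq_card_of_mul_eq_one {R m k : Type*} [CommRing R] [StrongRankCondition R]
    [Fintype m] [Fintype k] [DecidableEq k] (B : Matrix k m R) (M : Matrix m k R)
    (h : B * M = 1) : M.rank = Fintype.card k :=
  le_antisymm M.rank_le_card_width <| calc
    Fintype.card k = (B * M).rank := by rw [h, rank_one]
    _ ≤ M.rank := rank_mul_le_right B M

theorem ColMod.map_submatrix_eq {ι κ l : Type*} [Fintype ι] {S B C : Matrix ι ι ℤ}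
    (h : ColMod S B C) {p : ℕ} (g : κ → ι) (f : l → ι)
    (hp : ∀ k, (p : ℤ) ∣ S (f k) (f k)) :
    (B.map (Int.cast : ℤ → ZMod p)).submatrix g f =
      (C.map (Int.cast : ℤ → ZMod p)).submatrix g f := by
  ext r k
  exact (ZMod.intCast_eq_intCast_iff_dvd_sub _ _ _).2
    ((hp k).trans (dvd_sub_comm.1 (h (g r) (f k))))

/-- For every `1 ≤ i ≤ n` and every prime `p` dividing `s_{n-i+1}`, the last `i`
columns of a Smith massager `M` have full rank `i` over `ℤ/(p)`. -/
theorem lastCols_massager_fullRank {n : ℕ}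
    (A S M : Matrix (Fin n) (Fin n) ℤ)
    (hS : IsSmithForm A S) (hM : IsSmithMassager A S M)
    (i : ℕ) (h1 : 1 ≤ i) (h2 : i ≤ n)
    (p : ℕ) (hp : p.Prime)
    (hdvd : (p : ℤ) ∣ S ⟨n - i, by omega⟩ ⟨n - i, by omega⟩) :
    ((M.map (Int.cast : ℤ → ZMod p)).submatrix id
      (fun k : Fin i => (⟨n - i + k.val, by have := k.isLt; omega⟩ : Fin n))).rank
      = i := by
  have : Fact p.Prime := ⟨hp⟩
  obtain ⟨-, W, hWM⟩ := hM
  set f : Fin i → Fin n := fun k => ⟨n - i + k.val, by have := k.isLt; omega⟩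
  have hf : Function.Injective f := fun a b hab => Fin.ext (by simpa [f] using hab)
  have hpf : ∀ k, (p : ℤ) ∣ S (f k) (f k) := fun k =>
    hdvd.trans (hS.2.2.1 _ _ (by simp [f, Fin.le_def]))
  refine (rank_eq_card_of_mul_eq_one
    ((W.map (Int.cast : ℤ → ZMod p)).submatrix f id) _ ?_).trans (Fintype.card_fin i)
  have hmap : (W * M).map (Int.cast : ℤ → ZMod p) = W.map Int.cast * M.map Int.cast :=
    Matrix.map_mul (f := Int.castRingHom _)
  rw [← submatrix_mul _ _ _ id _ Function.bijective_id, ← hmap, hWM.map_submatrix_eq f f hpf]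
  simp [submatrix_one _ hf]
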